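/- Suppose ψ₀ ∈ S(ℝ², ℂ) satisfies a⁻ψ₀ = 0. Then for every natural number n, H((a⁺)ⁿψ₀) = (n + 1/2)·(a⁺)ⁿψ₀, where (a⁺)ⁿ denotes the n-fold iterate of a⁺. -/

import Mathlib

open MeasureTheory Complex
open scoped ENNReal

noncomputable section

/-- `p_x = −i·ħ₀·∂_x`. -/
def pxOp (hb : ℝ) (f : ℝ × ℝ → ℂ) : ℝ × ℝ → ℂ := fun p =>
  -Complex.I * hb * fderiv ℝ f p (1, 0)

/-- `p_y = −i·ħ₀·∂_y`. -/
def pyOp (hb : ℝ) (f : ℝ × ℝ → ℂ) : ℝ × ℝ → ℂ := fun p =>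
  -Complex.I * hb * fderiv ℝ f p (0, 1)

/-- `Π_x = ((1−r)ħ₀B₀/(ħ₀−rθ₀B₀))·y + (((r+s−rs)θ₀B₀−ħ₀)/(rθ₀B₀−ħ₀))·p_x`. -/
def PixOp (hb th B r s : ℝ) (f : ℝ × ℝ → ℂ) : ℝ × ℝ → ℂ := fun p =>
  ((1 - r) * hb * B / (hb - r * th * B)) * p.2 * f p +
    (((r + s - r * s) * th * B - hb) / (r * th * B - hb)) * pxOp hb f p

/-- `Π_y = −rB₀·x + (1 + r(s−1)θ₀B₀/ħ₀)·p_y`. -/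
def PiyOp (hb th B r s : ℝ) (f : ℝ × ℝ → ℂ) : ℝ × ℝ → ℂ := fun p =>
  -(r * B) * p.1 * f p + (1 + r * (s - 1) * th * B / hb) * pyOp hb f p

/-- `Π̃_x = Π_x / √(ħ₀B₀)`. -/
def PixT (hb th B r s : ℝ) (f : ℝ × ℝ → ℂ) : ℝ × ℝ → ℂ := fun p =>
  (Real.sqrt (hb * B))⁻¹ * PixOp hb th B r s f p

/-- `Π̃_y = Π_y / √(ħ₀B₀)`. -/
def PiyT (hb th B r s : ℝ) (f : ℝ × ℝ → ℂ) : ℝ × ℝ → ℂ := fun p =>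
  (Real.sqrt (hb * B))⁻¹ * PiyOp hb th B r s f p

/-- `a⁻ = (Π̃_x + i Π̃_y)/√2`. -/
def aMinus (hb th B r s : ℝ) (f : ℝ × ℝ → ℂ) : ℝ × ℝ → ℂ := fun p =>
  (PixT hb th B r s f p + Complex.I * PiyT hb th B r s f p) / Real.sqrt 2

/-- `a⁺ = (Π̃_x − i Π̃_y)/√2`. -/
def aPlus (hb th B r s : ℝ) (f : ℝ × ℝ → ℂ) : ℝ × ℝ → ℂ := fun p =>
  (PixT hb th B r s f p - Complex.I * PiyT hb th B r s f p) / Real.sqrt 2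

/-- `H = ((Π̃_x)² + (Π̃_y)²)/2`. -/
def Hop (hb th B r s : ℝ) (f : ℝ × ℝ → ℂ) : ℝ × ℝ → ℂ := fun p =>
  (PixT hb th B r s (PixT hb th B r s f) p + PiyT hb th B r s (PiyT hb th B r s f) p) / 2

/-!
On smooth functions the multiplication operators `x, y` and the derivatives `∂x, ∂y` satisfy the
canonical commutation relations. Hence the rescaled kinetic momenta satisfy `[Π̃_x, Π̃_y] = i`
(this is where `ħ₀B₀ > 0` and an identity between the coefficients of `Π_x`, `Π_y` enter), so that
`[a⁻, a⁺] = 1` and `H = a⁺a⁻ + 1/2`. The usual ladder argument `a⁻ (a⁺)ⁿ⁺¹ ψ₀ = (n + 1) (a⁺)ⁿ ψ₀`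
then gives `H (a⁺)ⁿ ψ₀ = (n + 1/2) (a⁺)ⁿ ψ₀`.

To do this algebra in a ring, the operators are realised as `ℂ`-linear endomorphisms of the
submodule of smooth functions, which contains `ψ₀` and on which they agree with the given ones.
-/

open scoped ContDiff

section SmoothFunctions

variable {E : Type*} [NormedAddCommGroup E] [NormedSpace ℝ E]

variable (E) in
def smoothFun : Submodule ℂ (E → ℂ) where
  carrier := {f | ContDiff ℝ ∞ f}
  add_mem' {f g} (hf : ContDiff ℝ ∞ f) (hg : ContDiff ℝ ∞ g) := hf.add hg
  zero_mem' := (contDiff_const : ContDiff ℝ ∞ fun _ : E => (0 : ℂ))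
  smul_mem' c f (hf : ContDiff ℝ ∞ f) := hf.const_smul c

lemma mem_smoothFun {f : E → ℂ} : f ∈ smoothFun E ↔ ContDiff ℝ ∞ f := Iff.rfl

lemma contDiff_smoothFun (f : smoothFun E) : ContDiff ℝ ∞ (f : E → ℂ) := f.2

lemma differentiable_smoothFun (f : smoothFun E) : Differentiable ℝ (f : E → ℂ) :=
  (contDiff_smoothFun f).differentiable (by simp)

def derivOp (v : E) : Module.End ℂ (smoothFun E) where
  toFun f := ⟨fun p => fderiv ℝ f p v, mem_smoothFun.2 <|
    ((contDiff_smoothFun f).fderiv_right (m := ∞) (by simp)).clm_apply contDiff_const⟩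
  map_add' f g := by
    ext p
    simp [fderiv_add (differentiable_smoothFun f p) (differentiable_smoothFun g p)]
  map_smul' c f := by
    ext p
    simp [fderiv_const_smul (differentiable_smoothFun f p) c]

def mulOp (ℓ : E →L[ℝ] ℝ) : Module.End ℂ (smoothFun E) where
  toFun f := ⟨fun p => (ℓ p : ℂ) * (f : E → ℂ) p, mem_smoothFun.2 <|
    (ofRealCLM.contDiff.comp ℓ.contDiff).mul (contDiff_smoothFun f)⟩
  map_add' f g := by
    ext p
    simp [mul_add]
  map_smul' c f := by
    ext p
    simp [mul_left_comm]

@[simp] lemma coe_derivOp (v : E) (f : smoothFun E) :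
    (derivOp v f : E → ℂ) = fun p => fderiv ℝ f p v := rfl

@[simp] lemma coe_mulOp (ℓ : E →L[ℝ] ℝ) (f : smoothFun E) :
    (mulOp ℓ f : E → ℂ) = fun p => ℓ p * (f : E → ℂ) p := rfl

lemma derivOp_mul_mulOp_sub (v : E) (ℓ : E →L[ℝ] ℝ) :
    derivOp v * mulOp ℓ - mulOp ℓ * derivOp v = (ℓ v : ℂ) • 1 := by
  ext f p
  have hℓ : HasFDerivAt (fun q => (ℓ q : ℂ)) (ofRealCLM.comp ℓ) p :=
    ofRealCLM.hasFDerivAt.comp p ℓ.hasFDerivAt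
  have h : HasFDerivAt (fun q => (ℓ q : ℂ) * (f : E → ℂ) q) _ p :=
    hℓ.mul (differentiable_smoothFun f p).hasFDerivAt
  simp only [LinearMap.sub_apply, Module.End.mul_apply, AddSubgroupClass.coe_sub, coe_derivOp,
    coe_mulOp, Pi.sub_apply, h.fderiv, add_apply, smul_apply,
    smul_eq_mul, ContinuousLinearMap.comp_apply, ofRealCLM_apply, LinearMap.smul_apply,
    Module.End.one_apply, SetLike.val_smul, Pi.smul_apply]
  ring

lemma commute_derivOp (v w : E) : Commute (derivOp (E := E) v) (derivOp w) := by
  ext f p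
  have hsymm := ((contDiff_smoothFun f).contDiffAt (x := p)).isSymmSndFDerivAt
    (by simp [minSmoothness_of_isRCLikeNormedField]; exact ENat.LEInfty.out) v w
  have hd : Differentiable ℝ (fderiv ℝ (f : E → ℂ)) :=
    ((contDiff_smoothFun f).fderiv_right (m := ∞) (by simp)).differentiable (by simp)
  simp [fderiv_clm_apply (hd p) (differentiableAt_const _), hsymm]

lemma commute_mulOp (ℓ ℓ' : E →L[ℝ] ℝ) : Commute (mulOp (E := E) ℓ) (mulOp ℓ') := by
  ext f p
  simp only [Module.End.mul_apply, coe_mulOp]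
  ring

end SmoothFunctions

lemma mul_pow_succ_of_commutator_eq_one {A : Type*} [Ring A] {a b : A} (h : a * b - b * a = 1)
    (n : ℕ) :
    a * b ^ (n + 1) = b ^ (n + 1) * a + (n + 1 : A) * b ^ n := by
  have hab : a * b = b * a + 1 := by rw [← h]; abel
  induction n with
  | zero => simpa using hab
  | succ n ih =>
    rw [pow_succ _ (n + 1), ← mul_assoc, ih, add_mul, mul_assoc, hab]
    push_cast
    noncomm_ring

lemma Module.End.mul_apply_pow_apply_of_commutator_eq_one {R M : Type*} [CommRing R]
    [AddCommGroup M] [Module R M] {a b : Module.End R M} (h : a * b - b * a = 1) {v : M}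
    (hv : a v = 0) (n : ℕ) :
    (b * a) ((b ^ n) v) = (n : R) • (b ^ n) v := by
  cases n with
  | zero => simp [hv]
  | succ n =>
    rw [Module.End.mul_apply, ← Module.End.mul_apply a, mul_pow_succ_of_commutator_eq_one h]
    simp [hv, pow_succ', add_smul, Nat.cast_smul_eq_nsmul]

section ComplexAlgebra
variable {A : Type*} [Ring A] [Algebra ℂ A] {X Y : A}

lemma commutator_ladder_eq_one {c : ℂ} (hc : c ^ 2 = 2⁻¹) (h : X * Y - Y * X = I • 1) :
    c • (X + I • Y) * c • (X - I • Y) - c • (X - I • Y) * c • (X + I • Y) = 1 := by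
  rw [smul_mul_smul_comm, smul_mul_smul_comm, ← sq c, hc]
  simp only [mul_add, add_mul, mul_sub, sub_mul, smul_mul_assoc, mul_smul_comm]
  linear_combination (norm := module) (-I) • h - I_sq • (1 : A)

lemma half_sum_sq_eq_ladder_mul_add_half {c : ℂ} (hc : c ^ 2 = 2⁻¹) (h : X * Y - Y * X = I • 1) :
    (2⁻¹ : ℂ) • (X * X + Y * Y) = c • (X - I • Y) * c • (X + I • Y) + (2⁻¹ : ℂ) • 1 := by
  rw [smul_mul_smul_comm, ← sq c, hc]
  simp only [mul_add, sub_mul, smul_mul_assoc, mul_smul_comm]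
  linear_combination (norm := module) (-(2⁻¹ : ℂ) * I) • h + ((2⁻¹ : ℂ) * I_sq) • (Y * Y - 1)

lemma commutator_linear_combination_of_ccr {Dx Dy : A} (hx : Dx * X - X * Dx = 1)
    (hy : Dy * Y - Y * Dy = 1) (hd : Commute Dx Dy) (hm : Commute Y X) (a b c d : ℂ) :
    (b • Y + c • Dx) * (a • X + d • Dy) - (a • X + d • Dy) * (b • Y + c • Dx) =
      (c * a - b * d) • 1 := by
  simp only [mul_add, add_mul, smul_mul_assoc, mul_smul_comm]
  linear_combination (norm := module)
    (c * a) • hx - (b * d) • hy + (c * d) • hd.eq + (b * a) • hm.eq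

end ComplexAlgebra

namespace LandauLevel

variable (hb th B r s : ℝ)

local notation "𝒮" => smoothFun (ℝ × ℝ)

lemma mulOp_derivOp_commutator (a b c d : ℂ) :
    (b • mulOp (.snd ℝ ℝ ℝ) + c • derivOp (1, 0)) *
        (a • mulOp (.fst ℝ ℝ ℝ) + d • derivOp (0, 1)) -
      (a • mulOp (.fst ℝ ℝ ℝ) + d • derivOp (0, 1)) *
        (b • mulOp (.snd ℝ ℝ ℝ) + c • derivOp (1, 0)) =
      (c * a - b * d) • (1 : Module.End ℂ 𝒮) := by
  have hx := derivOp_mul_mulOp_sub ((1, 0) : ℝ × ℝ) (.fst ℝ ℝ ℝ)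
  have hy := derivOp_mul_mulOp_sub ((0, 1) : ℝ × ℝ) (.snd ℝ ℝ ℝ)
  simp only [ContinuousLinearMap.coe_fst', ContinuousLinearMap.coe_snd', Complex.ofReal_one,
    one_smul] at hx hy
  exact commutator_linear_combination_of_ccr (A := Module.End ℂ 𝒮) hx hy (commute_derivOp _ _)
    (commute_mulOp _ _) a b c d

def piX : Module.End ℂ 𝒮 :=
  (((Real.sqrt (hb * B))⁻¹ * ((1 - r) * hb * B / (hb - r * th * B)) : ℝ) : ℂ) •
      mulOp (.snd ℝ ℝ ℝ) +
    ((((Real.sqrt (hb * B))⁻¹ * (((r + s - r * s) * th * B - hb) / (r * th * B - hb)) : ℝ) : ℂ) *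
      (-I * hb)) • derivOp (1, 0)

def piY : Module.End ℂ 𝒮 :=
  (((Real.sqrt (hb * B))⁻¹ * -(r * B) : ℝ) : ℂ) • mulOp (.fst ℝ ℝ ℝ) +
    ((((Real.sqrt (hb * B))⁻¹ * (1 + r * (s - 1) * th * B / hb) : ℝ) : ℂ) * (-I * hb)) •
      derivOp (0, 1)

lemma coe_piX (f : 𝒮) : (piX hb th B r s f : ℝ × ℝ → ℂ) = PixT hb th B r s f := by
  funext p
  simp only [piX, PixT, PixOp, pxOp, LinearMap.add_apply, LinearMap.smul_apply, Submodule.coe_add,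
    SetLike.val_smul, coe_mulOp, coe_derivOp, ContinuousLinearMap.coe_snd', Pi.add_apply,
    Pi.smul_apply, smul_eq_mul]
  push_cast
  ring

lemma coe_piY (f : 𝒮) : (piY hb th B r s f : ℝ × ℝ → ℂ) = PiyT hb th B r s f := by
  funext p
  simp only [piY, PiyT, PiyOp, pyOp, LinearMap.add_apply, LinearMap.smul_apply, Submodule.coe_add,
    SetLike.val_smul, coe_mulOp, coe_derivOp, ContinuousLinearMap.coe_fst', Pi.add_apply,
    Pi.smul_apply, smul_eq_mul]
  push_cast
  ring

-- `[Π_x, Π_y] = i ħ₀ B₀` comes down to this identity between the coefficients of `Π_x`, `Π_y`.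
lemma coeff_identity (hhb : hb ≠ 0) (hrs : r * th * B ≠ hb) :
    (1 - r) * hb * B / (hb - r * th * B) * (1 + r * (s - 1) * th * B / hb) -
      ((r + s - r * s) * th * B - hb) / (r * th * B - hb) * -(r * B) = B := by
  have h₁ : hb - r * th * B ≠ 0 := sub_ne_zero.2 hrs.symm
  have h₂ : r * th * B - hb = -(hb - r * th * B) := by ring
  rw [h₂]
  field_simp
  linear_combination B * mul_inv_cancel₀ h₁

lemma piX_mul_piY_sub (hrs : r * th * B ≠ hb) (hpos : 0 < hb * B) :
    piX hb th B r s * piY hb th B r s - piY hb th B r s * piX hb th B r s = I • 1 := by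
  rw [piX, piY, mulOp_derivOp_commutator]
  congr 1
  have hdet := congrArg ofReal (coeff_identity hb th B r s (left_ne_zero_of_mul hpos.ne') hrs)
  have hk := congrArg ofReal (show (Real.sqrt (hb * B))⁻¹ ^ 2 * (hb * B) = 1 by
    rw [inv_pow, Real.sq_sqrt hpos.le, inv_mul_cancel₀ hpos.ne'])
  push_cast at hdet hk ⊢
  linear_combination (I * hb * ((Real.sqrt (hb * B) : ℂ))⁻¹ ^ 2) * hdet + I * hk

def lower : Module.End ℂ 𝒮 := ((Real.sqrt 2 : ℝ) : ℂ)⁻¹ • (piX hb th B r s + I • piY hb th B r s)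

def raise : Module.End ℂ 𝒮 := ((Real.sqrt 2 : ℝ) : ℂ)⁻¹ • (piX hb th B r s - I • piY hb th B r s)

lemma inv_sqrt_two_sq : (((Real.sqrt 2 : ℝ) : ℂ)⁻¹) ^ 2 = 2⁻¹ := by
  rw [inv_pow, ← ofReal_pow, Real.sq_sqrt zero_le_two, ofReal_ofNat]

lemma lower_mul_raise_sub (hrs : r * th * B ≠ hb) (hpos : 0 < hb * B) :
    lower hb th B r s * raise hb th B r s - raise hb th B r s * lower hb th B r s = 1 := by
  unfold lower raise
  exact commutator_ladder_eq_one (A := Module.End ℂ 𝒮) inv_sqrt_two_sq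
    (piX_mul_piY_sub hb th B r s hrs hpos)

lemma coe_lower (f : 𝒮) : (lower hb th B r s f : ℝ × ℝ → ℂ) = aMinus hb th B r s f := by
  funext p
  simp only [lower, aMinus, LinearMap.smul_apply, LinearMap.add_apply, SetLike.val_smul,
    Submodule.coe_add, Pi.smul_apply, Pi.add_apply, smul_eq_mul, ← coe_piX, ← coe_piY]
  ring

lemma coe_raise (f : 𝒮) : (raise hb th B r s f : ℝ × ℝ → ℂ) = aPlus hb th B r s f := by
  funext p
  simp only [raise, aPlus, LinearMap.smul_apply, LinearMap.sub_apply, SetLike.val_smul,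
    AddSubgroupClass.coe_sub, Pi.smul_apply, Pi.sub_apply, smul_eq_mul, ← coe_piX, ← coe_piY]
  ring

lemma coe_hamiltonian (f : 𝒮) :
    (((2⁻¹ : ℂ) • (piX hb th B r s * piX hb th B r s + piY hb th B r s * piY hb th B r s)) f :
      ℝ × ℝ → ℂ) = Hop hb th B r s f := by
  funext p
  simp only [Hop, LinearMap.smul_apply, LinearMap.add_apply, Module.End.mul_apply, SetLike.val_smul,
    Submodule.coe_add, Pi.smul_apply, Pi.add_apply, smul_eq_mul, ← coe_piX, ← coe_piY]
  ring

lemma hamiltonian_eq (hrs : r * th * B ≠ hb) (hpos : 0 < hb * B) :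
    (2⁻¹ : ℂ) • (piX hb th B r s * piX hb th B r s + piY hb th B r s * piY hb th B r s) =
      raise hb th B r s * lower hb th B r s + (2⁻¹ : ℂ) • 1 := by
  unfold lower raise
  exact half_sum_sq_eq_ladder_mul_add_half (A := Module.End ℂ 𝒮) inv_sqrt_two_sq
    (piX_mul_piY_sub hb th B r s hrs hpos)

lemma hop_eq_raise_mul_lower (hrs : r * th * B ≠ hb) (hpos : 0 < hb * B) (f : 𝒮) :
    Hop hb th B r s f =
      ((raise hb th B r s * lower hb th B r s) f : ℝ × ℝ → ℂ) + (2⁻¹ : ℂ) • (f : ℝ × ℝ → ℂ) := by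
  rw [← coe_hamiltonian, hamiltonian_eq hb th B r s hrs hpos]
  rfl

lemma iterate_aPlus (f : 𝒮) (n : ℕ) :
    (aPlus hb th B r s)^[n] f = ((raise hb th B r s ^ n) f : ℝ × ℝ → ℂ) := by
  induction n with
  | zero => rfl
  | succ n ih => rw [Function.iterate_succ_apply', ih, ← coe_raise, pow_succ', Module.End.mul_apply]

end LandauLevel

theorem stmt13_general (hb th B r s : ℝ) (hrs : r * th * B ≠ hb) (hpos : 0 < hb * B)
    (ψ₀ : SchwartzMap (ℝ × ℝ) ℂ)
    (hground : aMinus hb th B r s ⇑ψ₀ = 0) :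
    ∀ n : ℕ,
      Hop hb th B r s ((aPlus hb th B r s)^[n] ⇑ψ₀) =
        ((n : ℂ) + 1 / 2) • (aPlus hb th B r s)^[n] ⇑ψ₀ := by
  intro n
  let ψ : smoothFun (ℝ × ℝ) := ⟨ψ₀, mem_smoothFun.2 (ψ₀.smooth ⊤)⟩
  have hψ : LandauLevel.lower hb th B r s ψ = 0 :=
    Subtype.ext (by rw [LandauLevel.coe_lower]; exact hground)
  rw [show ⇑ψ₀ = (ψ : ℝ × ℝ → ℂ) from rfl, LandauLevel.iterate_aPlus,
    LandauLevel.hop_eq_raise_mul_lower hb th B r s hrs hpos,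
    Module.End.mul_apply_pow_apply_of_commutator_eq_one
      (LandauLevel.lower_mul_raise_sub hb th B r s hrs hpos) hψ,
    Submodule.coe_smul, ← add_smul]
  norm_num

theorem stmt13 (hb th B r s : ℝ) (hhb : hb ≠ 0) (hth : th ≠ 0) (hB : B ≠ 0)
    (hnd : hb - th * B ≠ 0) (hrs : r * th * B ≠ hb) (hpos : 0 < hb * B)
    (ψ₀ : SchwartzMap (ℝ × ℝ) ℂ)
    (hground : aMinus hb th B r s ⇑ψ₀ = 0) :
    ∀ n : ℕ,
      Hop hb th B r s ((aPlus hb th B r s)^[n] ⇑ψ₀) =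
        ((n : ℂ) + 1 / 2) • (aPlus hb th B r s)^[n] ⇑ψ₀ :=
  stmt13_general hb th B r s hrs hpos ψ₀ hground
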